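/- (Spectral Maximin Theorem) Let n ≥ 1 and m ≥ 1, and let A₁, …, A_m be n × n real symmetric matrices. Then max over X in the spectraplex Δ_n of (min over y in the simplex S_m of ∑_{i=1}^m y_i (A_i • X)) equals min over y in S_m of (max over X in Δ_n of ∑_{i=1}^m y_i (A_i • X)); both the outer maximum/minimum and inner minimum/maximum are attained. -/

import Mathlib

open Matrix BigOperators

/-- The spectraplex: symmetric positive semidefinite `n × n` real matrices of trace one. -/
def spectraplex (n : ℕ) : Set (Matrix (Fin n) (Fin n) ℝ) :=
  {X | X.IsSymm ∧ X.PosSemidef ∧ X.trace = 1}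

/-- The unit simplex in `ℝ^m`. -/
def unitSimplex (m : ℕ) : Set (Fin m → ℝ) :=
  {y | (∑ i, y i) = 1 ∧ ∀ i, 0 ≤ y i}

/-! The maximin value `v` is attained at some `X₀`, since `X ↦ minᵢ Aᵢ • X` is continuous and the
spectraplex is compact. The image of the spectraplex under `X ↦ (Aᵢ • X)ᵢ` is a convex subset of
`ℝᵐ` missing the open orthant `{x | ∀ i, v < xᵢ}`. A hyperplane separating the two has a normal
with nonpositive coordinates, and normalising it gives `y ∈ Sₘ` with `∑ yᵢ (Aᵢ • X) ≤ v` on the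
whole spectraplex. Together with weak duality this makes `v` the minimax value as well. -/

open Finset

section Simplex

variable {m : ℕ}

lemma single_mem_unitSimplex (i : Fin m) : (Pi.single i 1 : Fin m → ℝ) ∈ unitSimplex m :=
  ⟨by simp, fun j => by by_cases h : j = i <;> simp [h]⟩

lemma isLeast_unitSimplex_sum_mul [NeZero m] (c : Fin m → ℝ) :
    IsLeast {s | ∃ y ∈ unitSimplex m, s = ∑ i, y i * c i} (univ.inf' univ_nonempty c) := by
  refine ⟨?_, ?_⟩
  · obtain ⟨i, -, hi⟩ := exists_mem_eq_inf' univ_nonempty c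
    exact ⟨Pi.single i 1, single_mem_unitSimplex i, by simp [hi, Pi.single_apply]⟩
  · rintro s ⟨y, hy, rfl⟩
    calc univ.inf' univ_nonempty c = ∑ i, y i * univ.inf' univ_nonempty c := by
          rw [← sum_mul, hy.1, one_mul]
      _ ≤ ∑ i, y i * c i :=
          sum_le_sum fun i _ => mul_le_mul_of_nonneg_left (inf'_le c (mem_univ i)) (hy.2 i)

end Simplex

namespace ContinuousLinearMap

variable {ι : Type*} [Fintype ι] [DecidableEq ι]

lemma apply_eq_sum_mul_apply_single (f : (ι → ℝ) →L[ℝ] ℝ) (x : ι → ℝ) :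
    f x = ∑ i, x i * f (Pi.single i 1) := by
  conv_lhs => rw [← univ_sum_single x]
  simp only [map_sum]
  refine sum_congr rfl fun i _ => ?_
  rw [← smul_eq_mul, ← map_smul, ← Pi.single_smul, smul_eq_mul, mul_one]

lemma apply_single_nonpos_of_lt_on_orthant {f : (ι → ℝ) →L[ℝ] ℝ} {u v : ℝ}
    (hf : ∀ x ∈ Set.univ.pi fun _ => Set.Ioi v, f x < u) (i : ι) : f (Pi.single i 1) ≤ 0 := by
  by_contra! hi
  set x₀ : ι → ℝ := fun _ => v + 1
  have hray : ∀ t : ℝ, 0 ≤ t → f x₀ + t * f (Pi.single i 1) < u := fun t ht => by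
    have hmem : x₀ + Pi.single i t ∈ Set.univ.pi fun _ => Set.Ioi v := fun j _ => by
      have : 0 ≤ (Pi.single i t : ι → ℝ) j := by by_cases h : j = i <;> simp [h, ht]
      simp only [Pi.add_apply, Set.mem_Ioi, x₀]
      linarith
    simpa [apply_eq_sum_mul_apply_single f (Pi.single i t), Pi.single_apply] using hf _ hmem
  have := hray ((u - f x₀) / f (Pi.single i 1))
    (div_nonneg (by linarith [hray 0 le_rfl]) hi.le)
  rw [div_mul_cancel₀ _ hi.ne'] at this
  linarith

end ContinuousLinearMap

theorem exists_mem_unitSimplex_sum_mul_le {m : ℕ} {C : Set (Fin m → ℝ)} (hC : Convex ℝ C)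
    (hCne : C.Nonempty) {v : ℝ} (hv : ∀ c ∈ C, ∃ i, c i ≤ v) :
    ∃ y ∈ unitSimplex m, ∀ c ∈ C, ∑ i, y i * c i ≤ v := by
  have hdisj : Disjoint (Set.univ.pi fun _ => Set.Ioi v) C :=
    Set.disjoint_left.2 fun x hxO hxC => by
      obtain ⟨i, hi⟩ := hv x hxC
      exact hi.not_gt (hxO i (Set.mem_univ i))
  obtain ⟨f, u, hfO, hfC⟩ := geometric_hahn_banach_open (convex_pi fun _ _ => convex_Ioi v)
    (isOpen_set_pi Set.finite_univ fun _ _ => isOpen_Ioi) hC hdisj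
  set a : Fin m → ℝ := fun i => f (Pi.single i 1)
  have ha : ∀ i, a i ≤ 0 := f.apply_single_nonpos_of_lt_on_orthant hfO
  have hf : ∀ x, f x = ∑ i, x i * a i := f.apply_eq_sum_mul_apply_single
  -- the constant vectors `v + ε` lie in the orthant
  have hlt : ∀ c ∈ C, ∀ ε > 0, (v + ε) * ∑ i, a i < ∑ i, c i * a i := fun c hc ε hε => by
    rw [mul_sum, ← hf, ← hf]
    exact (hfO _ fun i _ => by simpa using hε).trans_le (hfC c hc)
  obtain ⟨c₀, hc₀⟩ := hCne
  have hS : ∑ i, a i < 0 := by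
    refine (sum_nonpos fun i _ => ha i).lt_of_ne fun hS => ?_
    have ha0 : ∀ i, a i = 0 := fun i =>
      (sum_eq_zero_iff_of_nonpos fun j _ => ha j).1 hS i (mem_univ i)
    simpa [ha0] using hlt c₀ hc₀ 1 one_pos
  refine ⟨fun i => a i / ∑ j, a j, ⟨?_, fun i => div_nonneg_of_nonpos (ha i) hS.le⟩,
    fun c hc => le_of_forall_pos_lt_add fun ε hε => ?_⟩
  · rw [← sum_div, div_self hS.ne]
  · have : ∑ i, a i / (∑ j, a j) * c i = (∑ i, c i * a i) / ∑ j, a j := by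
      rw [sum_div]
      exact sum_congr rfl fun i _ => by ring
    dsimp only
    rw [this, div_lt_iff_of_neg hS]
    exact hlt c hc ε hε

section Minimax

variable {E : Type*} [AddCommGroup E] [Module ℝ E] [TopologicalSpace E] {K : Set E} {m : ℕ}

theorem unitSimplex_maximin_eq_minimax [NeZero m] (hK : IsCompact K) (hKc : Convex ℝ K)
    (hKne : K.Nonempty) (f : Fin m → StrongDual ℝ E) :
    (∀ x ∈ K, ∃ l : ℝ, IsLeast {s : ℝ | ∃ y ∈ unitSimplex m, s = ∑ i, y i * f i x} l) ∧
    (∀ y ∈ unitSimplex m, ∃ g : ℝ, IsGreatest {s : ℝ | ∃ x ∈ K, s = ∑ i, y i * f i x} g) ∧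
    ∃ v : ℝ,
      IsGreatest {r : ℝ | ∃ x ∈ K,
        IsLeast {s : ℝ | ∃ y ∈ unitSimplex m, s = ∑ i, y i * f i x} r} v ∧
      IsLeast {r : ℝ | ∃ y ∈ unitSimplex m,
        IsGreatest {s : ℝ | ∃ x ∈ K, s = ∑ i, y i * f i x} r} v := by
  set Φ : E → ℝ := fun x => univ.inf' univ_nonempty fun i => f i x
  have hlower : ∀ x, IsLeast {s | ∃ y ∈ unitSimplex m, s = ∑ i, y i * f i x} (Φ x) :=
    fun x => isLeast_unitSimplex_sum_mul _
  obtain ⟨x₀, hx₀K, hx₀⟩ := hK.exists_isMaxOn hKne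
    (Continuous.finset_inf'_apply univ_nonempty fun i _ => (f i).continuous).continuousOn
  obtain ⟨y₀, hy₀S, hy₀⟩ := exists_mem_unitSimplex_sum_mul_le
    (hKc.linear_image (LinearMap.pi fun i => (f i).toLinearMap)) (hKne.image _) (v := Φ x₀) <| by
      rintro _ ⟨x, hx, rfl⟩
      obtain ⟨i, -, hi⟩ := exists_mem_eq_inf' univ_nonempty fun i => f i x
      exact ⟨i, hi.symm.le.trans (hx₀ hx)⟩
  have hweak : ∀ y ∈ unitSimplex m, Φ x₀ ≤ ∑ i, y i * f i x₀ := fun y hy =>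
    (hlower x₀).2 ⟨y, hy, rfl⟩
  refine ⟨fun x _ => ⟨Φ x, hlower x⟩, fun y _ => ?_, Φ x₀, ⟨⟨x₀, hx₀K, hlower x₀⟩, ?_⟩,
    ⟨y₀, hy₀S, ⟨x₀, hx₀K, ?_⟩, ?_⟩, ?_⟩
  · obtain ⟨x, hx, hmax⟩ := hK.exists_isMaxOn hKne
      (continuous_finsetSum _ fun i _ => continuous_const.mul (f i).continuous).continuousOn
    exact ⟨_, ⟨x, hx, rfl⟩, by rintro _ ⟨x', hx', rfl⟩; exact hmax hx'⟩
  · rintro r ⟨x, hx, hr⟩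
    exact hr.unique (hlower x) ▸ hx₀ hx
  · exact le_antisymm (hweak y₀ hy₀S) (hy₀ _ ⟨x₀, hx₀K, rfl⟩)
  · rintro s ⟨x, hx, rfl⟩
    exact hy₀ _ ⟨x, hx, rfl⟩
  · rintro r ⟨y, hy, hr⟩
    exact (hweak y hy).trans (hr.2 ⟨x₀, hx₀K, rfl⟩)

end Minimax

lemma Matrix.PosSemidef.two_mul_abs_apply_le {ι : Type*} [Fintype ι] [DecidableEq ι]
    {X : Matrix ι ι ℝ} (hX : X.PosSemidef) (i j : ι) : 2 * |X i j| ≤ X i i + X j j := by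
  have hsymm : X j i = X i j := by simpa using hX.1.apply i j
  have h₁ := hX.dotProduct_mulVec_nonneg (Pi.single i 1 + Pi.single j 1)
  have h₂ := hX.dotProduct_mulVec_nonneg (Pi.single i 1 - Pi.single j 1)
  simp only [star_trivial, mulVec_add, mulVec_sub, mulVec_single, MulOpposite.op_one, one_smul,
    dotProduct_add, add_dotProduct, dotProduct_sub, sub_dotProduct, single_dotProduct, col_apply,
    one_mul, sub_nonneg, tsub_le_iff_right] at h₁ h₂
  rcases abs_cases (X i j) with ⟨h, -⟩ | ⟨h, -⟩ <;> linarith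

section Spectraplex

variable {n : ℕ}

lemma diagonal_single_mem_spectraplex (i : Fin n) : diagonal (Pi.single i 1) ∈ spectraplex n :=
  ⟨isSymm_diagonal _, PosSemidef.diagonal (Pi.single_nonneg.2 zero_le_one), by simp⟩

lemma convex_spectraplex : Convex ℝ (spectraplex n) := by
  rintro X ⟨hXs, hXp, hXt⟩ Y ⟨hYs, hYp, hYt⟩ a b ha hb hab
  exact ⟨(hXs.smul a).add (hYs.smul b), (hXp.smul ha).add (hYp.smul hb), by simp [hXt, hYt, hab]⟩

lemma isClosed_spectraplex : IsClosed (spectraplex n) := by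
  have : spectraplex n = {X | Xᵀ = X} ∩ (⋂ x : Fin n → ℝ, {X | 0 ≤ x ⬝ᵥ X *ᵥ x}) ∩
      {X | X.trace = 1} := by
    ext X
    simp [spectraplex, posSemidef_iff_dotProduct_mulVec, IsSymm, IsHermitian, and_assoc]
  rw [this]
  exact ((isClosed_eq (by fun_prop) (by fun_prop)).inter
    (isClosed_iInter fun x => isClosed_le (by fun_prop) (by fun_prop))).inter
    (isClosed_eq (by fun_prop) (by fun_prop))

lemma abs_apply_le_one_of_mem_spectraplex {X : Matrix (Fin n) (Fin n) ℝ} (hX : X ∈ spectraplex n)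
    (i j : Fin n) : |X i j| ≤ 1 := by
  obtain ⟨-, hXp, hXt⟩ := hX
  have hdiag : ∀ k, X k k ≤ 1 := fun k => by
    rw [← hXt]
    exact single_le_sum (f := fun k => X k k) (fun k _ => hXp.diag_nonneg) (mem_univ k)
  linarith [hXp.two_mul_abs_apply_le i j, hdiag i, hdiag j]

lemma isCompact_spectraplex : IsCompact (spectraplex n) :=
  (isCompact_univ_pi fun _ => isCompact_univ_pi fun _ => isCompact_Icc).of_isClosed_subset
    isClosed_spectraplex fun _ hX i _ j _ => abs_le.1 (abs_apply_le_one_of_mem_spectraplex hX i j)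

end Spectraplex

theorem spectral_maximin_general {n m : ℕ} (hn : 1 ≤ n) (hm : 1 ≤ m)
    (A : Fin m → Matrix (Fin n) (Fin n) ℝ) :
    (∀ X ∈ spectraplex n, ∃ l : ℝ,
      IsLeast {s : ℝ | ∃ y ∈ unitSimplex m, s = ∑ i, y i * (A i * X).trace} l) ∧
    (∀ y ∈ unitSimplex m, ∃ g : ℝ,
      IsGreatest {s : ℝ | ∃ X ∈ spectraplex n, s = ∑ i, y i * (A i * X).trace} g) ∧
    ∃ v : ℝ,
      IsGreatest {r : ℝ | ∃ X ∈ spectraplex n,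
        IsLeast {s : ℝ | ∃ y ∈ unitSimplex m, s = ∑ i, y i * (A i * X).trace} r} v ∧
      IsLeast {r : ℝ | ∃ y ∈ unitSimplex m,
        IsGreatest {s : ℝ | ∃ X ∈ spectraplex n, s = ∑ i, y i * (A i * X).trace} r} v := by
  have : NeZero m := NeZero.of_pos hm
  exact unitSimplex_maximin_eq_minimax isCompact_spectraplex convex_spectraplex
    ⟨_, diagonal_single_mem_spectraplex ⟨0, hn⟩⟩
    fun i => LinearMap.toContinuousLinearMap <|
      (traceLinearMap _ ℝ ℝ).comp (LinearMap.mulLeft ℝ (A i))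

/-- **Spectral Maximin Theorem.** Given real symmetric matrices `A 1, …, A m`,
`max_{X ∈ Δₙ} min_{y ∈ Sₘ} ∑ yᵢ (Aᵢ • X) = min_{y ∈ Sₘ} max_{X ∈ Δₙ} ∑ yᵢ (Aᵢ • X)`,
with all inner and outer extrema attained. -/
theorem spectral_maximin {n m : ℕ} (hn : 1 ≤ n) (hm : 1 ≤ m)
    (A : Fin m → Matrix (Fin n) (Fin n) ℝ) (hA : ∀ i, (A i).IsSymm) :
    (∀ X ∈ spectraplex n, ∃ l : ℝ,
      IsLeast {s : ℝ | ∃ y ∈ unitSimplex m, s = ∑ i, y i * (A i * X).trace} l) ∧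
    (∀ y ∈ unitSimplex m, ∃ g : ℝ,
      IsGreatest {s : ℝ | ∃ X ∈ spectraplex n, s = ∑ i, y i * (A i * X).trace} g) ∧
    ∃ v : ℝ,
      IsGreatest {r : ℝ | ∃ X ∈ spectraplex n,
        IsLeast {s : ℝ | ∃ y ∈ unitSimplex m, s = ∑ i, y i * (A i * X).trace} r} v ∧
      IsLeast {r : ℝ | ∃ y ∈ unitSimplex m,
        IsGreatest {s : ℝ | ∃ X ∈ spectraplex n, s = ∑ i, y i * (A i * X).trace} r} v :=
  spectral_maximin_general hn hm A
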